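/- Exponential comparison near a small critical point. For every c₀ > 0 there exists a constant C > 0 (depending only on c₀) such that for all t > 0, all k₀ ≥ 0 with t k₀³ ≤ c₀, and all r ≥ 0, with k = k₀ + r e^{iπ/6}: exp(−6 t |k − k₀|³) ≤ C exp(−2 t |k|³). -/

import Mathlib

/-!
Since `|k| ≤ k₀ + r`, it suffices to bound `2t(k₀ + r)³ - 6tr³` by a constant. The elementary
inequality `(k₀ + r)³ ≤ 6k₀³ + 3r³` bounds it by `12tk₀³ ≤ 12c₀`, so `C = exp (12 c₀)` works.
-/

open Real

/-- Convexity of `x ↦ x³` gives `(a + b)³ ≤ λ⁻² a³ + (1 - λ)⁻² b³`; take `1 - λ = 1/√3`. -/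
theorem add_pow_three_le {a b : ℝ} (ha : 0 ≤ a) (hb : 0 ≤ b) :
    (a + b) ^ 3 ≤ 6 * a ^ 3 + 3 * b ^ 3 := by
  nlinarith [mul_nonneg ha (sq_nonneg (a - b)), mul_nonneg hb (sq_nonneg (a - b)),
    mul_nonneg ha (sq_nonneg (2 * a - b)), mul_nonneg hb (sq_nonneg (2 * a - b)),
    mul_nonneg ha hb, pow_nonneg ha 3]

theorem exp_neg_six_mul_pow_three_le {t a b ρ : ℝ} (ht : 0 ≤ t) (ha : 0 ≤ a) (hb : 0 ≤ b)
    (hρ : 0 ≤ ρ) (hρab : ρ ≤ a + b) :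
    exp (-6 * t * b ^ 3) ≤ exp (12 * (t * a ^ 3)) * exp (-2 * t * ρ ^ 3) := by
  have hcube : ρ ^ 3 ≤ 6 * a ^ 3 + 3 * b ^ 3 :=
    (pow_le_pow_left₀ hρ hρab 3).trans (add_pow_three_le ha hb)
  rw [← exp_add, exp_le_exp]
  nlinarith [mul_le_mul_of_nonneg_left hcube ht]

theorem norm_exp_pi_div_six_mul_I : ‖Complex.exp (π / 6 * Complex.I)‖ = 1 := by
  rw [Complex.norm_exp]
  simp

theorem exp_comparison_near_critical_point (c0 : ℝ) :
    ∃ C : ℝ, 0 < C ∧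
      ∀ t : ℝ, 0 < t → ∀ k0 : ℝ, 0 ≤ k0 → t * k0 ^ 3 ≤ c0 → ∀ r : ℝ, 0 ≤ r →
        ∀ k : ℂ, k = (k0 : ℂ) + (r : ℂ) * Complex.exp (Real.pi / 6 * Complex.I) →
          Real.exp (-6 * t * ‖k - (k0 : ℂ)‖ ^ 3) ≤ C * Real.exp (-2 * t * ‖k‖ ^ 3) := by
  refine ⟨exp (12 * c0), exp_pos _, ?_⟩
  intro t ht k0 hk0 hc r hr k hk
  have hstep : ‖(r : ℂ) * Complex.exp (π / 6 * Complex.I)‖ = r := by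
    rw [norm_mul, norm_exp_pi_div_six_mul_I, mul_one, Complex.norm_real, norm_of_nonneg hr]
  have hdist : ‖k - k0‖ = r := by
    rwa [hk, add_sub_cancel_left]
  have hnorm : ‖k‖ ≤ k0 + r := by
    refine hk ▸ (norm_add_le _ _).trans ?_
    rw [hstep, Complex.norm_real, norm_of_nonneg hk0]
  calc exp (-6 * t * ‖k - k0‖ ^ 3)
      ≤ exp (12 * (t * k0 ^ 3)) * exp (-2 * t * ‖k‖ ^ 3) :=
        hdist ▸ exp_neg_six_mul_pow_three_le ht.le hk0 hr (norm_nonneg k) hnorm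
    _ ≤ exp (12 * c0) * exp (-2 * t * ‖k‖ ^ 3) := by gcongr
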